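/- For every triple (α, β, γ) of real numbers with α, β, γ ∈ (0, π) and α + β + γ = π, the sequence of iterates Tⁿ(α, β, γ) converges, as n → ∞, to (π/3, π/3, π/3). In other words, the iterated transformation converts every non-degenerate triangle, up to similarity, into the equilateral triangle. -/
import Mathlib


open Real Filter

/-- The angle-bisector-perpendicular triangle transformation on angle triples. -/
noncomputable def T (p : ℝ × ℝ × ℝ) : ℝ × ℝ × ℝ :=
  ((p.2.1 + p.2.2) / 2, (p.1 + p.2.2) / 2, (p.1 + p.2.1) / 2)

lemma iterate_T_formula (α β γ : ℝ) (hsum : α + β + γ = π) (n : ℕ) :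
    T^[n] (α, β, γ) = (π/3 + (-1/2 : ℝ)^n * (α - π/3),
                       π/3 + (-1/2 : ℝ)^n * (β - π/3),
                       π/3 + (-1/2 : ℝ)^n * (γ - π/3)) := by
  induction n with
  | zero => simp
  | succ n ih =>
    rw [Function.iterate_succ_apply', ih, T]
    simp only [Prod.mk.injEq]
    refine ⟨?_, ?_, ?_⟩ <;> · linear_combination ((-1/2:ℝ)^n/2) * hsum

theorem iterate_T_tendsto_equilateral (α β γ : ℝ)
    (hα : α ∈ Set.Ioo 0 π) (hβ : β ∈ Set.Ioo 0 π) (hγ : γ ∈ Set.Ioo 0 π)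
    (hsum : α + β + γ = π) :
    Tendsto (fun n : ℕ => T^[n] (α, β, γ)) atTop (nhds (π / 3, π / 3, π / 3)) := by
  have hpow : Tendsto (fun n : ℕ => ((-1/2 : ℝ))^n) atTop (nhds 0) := by
    apply tendsto_pow_atTop_nhds_zero_of_abs_lt_one
    rw [abs_lt]; constructor <;> norm_num
  have key : ∀ x : ℝ, Tendsto (fun n : ℕ => π/3 + (-1/2 : ℝ)^n * (x - π/3)) atTop (nhds (π/3)) := by
    intro x
    have := (hpow.mul_const (x - π/3)).const_add (π/3)
    simpa using this
  simp only [iterate_T_formula α β γ hsum]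
  exact Tendsto.prodMk_nhds (key α) (Tendsto.prodMk_nhds (key β) (key γ))
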